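/- arXiv:2307.08548 — 2 statements merged into one kernel-verified Lean document; each statement's English description precedes it below -/
import Mathlib

section
/- Combining the previous reductions: the optimal value of the dynamic beam routing problem (P2) with gains H_{k,t} ≥ 0 (not all H_{k,max} zero, where H_{k,max} := max_t H_{k,t} > 0 for all k) equals 1 / (∑_{k=1}^K H_{k,max}^{-1}). -/
/-! Writing `η k t = τ t * ρ k t`, the feasible schedules are exactly the nonnegative `η` of total
mass one, and user `k` receives `∑ t, η k t * H k t ≤ M k * ∑ t, η k t` with `M k = max_t H k t`.
Hence any common lower bound `v` of the users' rates satisfies `v * ∑ k, (M k)⁻¹ ≤ 1`. Conversely,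
giving user `k` the mass `(M k)⁻¹ / ∑ j, (M j)⁻¹` in one of its best slots equalises all rates at
`1 / ∑ k, (M k)⁻¹`. -/

open Finset

variable {ι σ : Type*} [Fintype ι] [Fintype σ]

theorem sum_sum_mul_eq_one {τ : σ → ℝ} {ρ : ι → σ → ℝ} (hτ : ∑ t, τ t = 1)
    (hρ : ∀ t, ∑ k, ρ k t = 1) : ∑ k, ∑ t, τ t * ρ k t = 1 := by
  rw [sum_comm]
  simp_rw [← mul_sum, hρ, mul_one, hτ]

theorem le_one_div_sum_inv [Nonempty ι] {M a : ι → ℝ} {v : ℝ} (hM : ∀ k, 0 < M k)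
    (h : ∀ k, v ≤ M k * a k) (ha : ∑ k, a k = 1) : v ≤ 1 / ∑ k, (M k)⁻¹ := by
  have hS : 0 < ∑ k, (M k)⁻¹ := sum_pos (fun k _ => inv_pos.2 (hM k)) univ_nonempty
  rw [le_div_iff₀ hS, mul_sum, ← ha]
  refine sum_le_sum fun k _ => ?_
  rw [mul_inv_le_iff₀ (hM k), mul_comm]
  exact h k

theorem iInf_sum_mul_le_one_div_sum_inv [Nonempty ι] {τ : σ → ℝ} {ρ H : ι → σ → ℝ}
    {M : ι → ℝ} (hτ0 : ∀ t, 0 ≤ τ t) (hτ : ∑ t, τ t = 1) (hρ0 : ∀ k t, 0 ≤ ρ k t)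
    (hρ : ∀ t, ∑ k, ρ k t = 1) (hM : ∀ k, 0 < M k) (hHM : ∀ k t, H k t ≤ M k) :
    ⨅ k, ∑ t, τ t * ρ k t * H k t ≤ 1 / ∑ k, (M k)⁻¹ := by
  refine le_one_div_sum_inv hM (fun k => ?_) (sum_sum_mul_eq_one hτ hρ)
  calc ⨅ k, ∑ t, τ t * ρ k t * H k t ≤ ∑ t, τ t * ρ k t * H k t :=
        ciInf_le (Set.finite_range _).bddBelow k
    _ ≤ ∑ t, τ t * ρ k t * M k :=
        sum_le_sum fun t _ => mul_le_mul_of_nonneg_left (hHM k t) (mul_nonneg (hτ0 t) (hρ0 k t))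
    _ = M k * ∑ t, τ t * ρ k t := by rw [← sum_mul, mul_comm]

theorem exists_mul_eq_of_sum_sum_eq_one [Nonempty ι] {η : ι → σ → ℝ}
    (hη0 : ∀ k t, 0 ≤ η k t) (hη : ∑ k, ∑ t, η k t = 1) :
    ∃ (τ : σ → ℝ) (ρ : ι → σ → ℝ), (∀ t, 0 ≤ τ t) ∧ ∑ t, τ t = 1 ∧ (∀ k t, 0 ≤ ρ k t) ∧
      (∀ t, ∑ k, ρ k t = 1) ∧ ∀ k t, τ t * ρ k t = η k t := by
  set τ : σ → ℝ := fun t => ∑ k, η k t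
  have hτ0 (t : σ) : 0 ≤ τ t := sum_nonneg fun k _ => hη0 k t
  -- a slot of zero length may split its power arbitrarily, here uniformly
  refine ⟨τ, fun k t => if τ t = 0 then 1 / Fintype.card ι else η k t / τ t, hτ0,
    by rw [← hη, sum_comm], fun k t => ?_, fun t => ?_, fun k t => ?_⟩
  · dsimp only
    split_ifs
    · positivity
    · exact div_nonneg (hη0 k t) (hτ0 t)
  · dsimp only
    split_ifs with ht
    · simp [Fintype.card_ne_zero]
    · rw [← sum_div, div_self ht]
  · dsimp only
    split_ifs with ht
    · have hηkt : η k t = 0 :=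
        le_antisymm (ht ▸ single_le_sum (fun j _ => hη0 j t) (mem_univ k)) (hη0 k t)
      rw [ht, hηkt, zero_mul]
    · exact mul_div_cancel₀ _ ht

theorem exists_sum_mul_eq_one_div_sum_inv [Nonempty ι] {H : ι → σ → ℝ}
    (best : ι → σ) (hpos : ∀ k, 0 < H k (best k)) :
    ∃ η : ι → σ → ℝ, (∀ k t, 0 ≤ η k t) ∧ ∑ k, ∑ t, η k t = 1 ∧
      ∀ k, ∑ t, η k t * H k t = 1 / ∑ j, (H j (best j))⁻¹ := by
  classical
  set S := ∑ j, (H j (best j))⁻¹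
  have hS : 0 < S := sum_pos (fun k _ => inv_pos.2 (hpos k)) univ_nonempty
  refine ⟨fun k t => if t = best k then (H k (best k))⁻¹ / S else 0, fun k t => ?_, ?_,
    fun k => ?_⟩
  · dsimp only
    split_ifs
    · exact div_nonneg (inv_pos.2 (hpos k)).le hS.le
    · exact le_rfl
  · simp_rw [sum_ite_eq', mem_univ, if_true]
    rw [← sum_div, div_self hS.ne']
  · simp_rw [ite_mul, zero_mul, sum_ite_eq', mem_univ, if_true]
    field_simp [(hpos k).ne']

theorem stmt12_general (K T : ℕ) (hK : 0 < K) (hT : 0 < T)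
    (H : Fin K → Fin T → ℝ)
    (hmax : ∀ k, 0 < ⨆ t, H k t) :
    IsGreatest {v : ℝ | ∃ (τ : Fin T → ℝ) (ρ : Fin K → Fin T → ℝ),
        (∀ t, 0 ≤ τ t) ∧ (∑ t, τ t) = 1 ∧
        (∀ k t, 0 ≤ ρ k t) ∧ (∀ t, (∑ k, ρ k t) = 1) ∧
        v = ⨅ k, ∑ t, τ t * ρ k t * H k t}
      (1 / ∑ k, (⨆ t, H k t)⁻¹) := by
  have : Nonempty (Fin K) := Fin.pos_iff_nonempty.1 hK
  have : Nonempty (Fin T) := Fin.pos_iff_nonempty.1 hT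
  choose best hbest using fun k => exists_eq_ciSup_of_finite (f := H k)
  refine ⟨?_, ?_⟩
  · obtain ⟨η, hη0, hη, hrate⟩ :=
      exists_sum_mul_eq_one_div_sum_inv best fun k => hbest k ▸ hmax k
    obtain ⟨τ, ρ, hτ0, hτ, hρ0, hρ, hτρ⟩ := exists_mul_eq_of_sum_sum_eq_one hη0 hη
    refine ⟨τ, ρ, hτ0, hτ, hρ0, hρ, ?_⟩
    simp_rw [hτρ, hrate, hbest, ciInf_const]
  · rintro v ⟨τ, ρ, hτ0, hτ, hρ0, hρ, rfl⟩
    exact iInf_sum_mul_le_one_div_sum_inv hτ0 hτ hρ0 hρ hmax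
      fun k t => le_ciSup (Set.finite_range _).bddAbove t

/-- Closed form of the optimal value of the dynamic beam routing problem (P2):
it equals `1 / ∑ k, (max_t H k t)⁻¹` when every user's best gain is positive. -/
theorem stmt12 (K T : ℕ) (hK : 0 < K) (hT : 0 < T)
    (H : Fin K → Fin T → ℝ) (hH : ∀ k t, 0 ≤ H k t)
    (hmax : ∀ k, 0 < ⨆ t, H k t) :
    IsGreatest {v : ℝ | ∃ (τ : Fin T → ℝ) (ρ : Fin K → Fin T → ℝ),
        (∀ t, 0 ≤ τ t) ∧ (∑ t, τ t) = 1 ∧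
        (∀ k t, 0 ≤ ρ k t) ∧ (∀ t, (∑ k, ρ k t) = 1) ∧
        v = ⨅ k, ∑ t, τ t * ρ k t * H k t}
      (1 / ∑ k, (⨆ t, H k t)⁻¹) :=
  stmt12_general K T hK hT H hmax
end

section
/- For any finite family of positive reals (H_{k,t})_{k∈K, t∈T} and any feasible (τ_t, ρ_{k,t}) for problem (P2), the achieved objective min_k ∑_t τ_t ρ_{k,t} H_{k,t} is at most 1/(∑_k (max_t H_{k,t})^{-1}); i.e., orthogonal single-slot assignment per user is optimal for dynamic beam routing. -/
/-- Upper bound for dynamic beam routing: any feasible `(τ, ρ)` for (P2) achieves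
a min-user received power of at most `1 / ∑ k, (max_t H k t)⁻¹`. -/
theorem stmt18 (K T : ℕ) (hK : 0 < K) (hT : 0 < T)
    (H : Fin K → Fin T → ℝ) (hH : ∀ k t, 0 < H k t)
    (τ : Fin T → ℝ) (ρ : Fin K → Fin T → ℝ)
    (hτ : ∀ t, 0 ≤ τ t) (hτsum : (∑ t, τ t) = 1)
    (hρ : ∀ k t, 0 ≤ ρ k t) (hρsum : ∀ t, (∑ k, ρ k t) = 1) :
    (⨅ k, ∑ t, τ t * ρ k t * H k t) ≤ 1 / ∑ k, (⨆ t, H k t)⁻¹ := by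
  haveI : NeZero K := ⟨hK.ne'⟩
  haveI : NeZero T := ⟨hT.ne'⟩
  set M : Fin K → ℝ := fun k => ⨆ t, H k t with hM
  set P : Fin K → ℝ := fun k => ∑ t, τ t * ρ k t * H k t with hP
  set m : ℝ := ⨅ k, P k with hm
  have hMle : ∀ k t, H k t ≤ M k := fun k t =>
    le_ciSup (Set.Finite.bddAbove (Set.finite_range _)) t
  have hMpos : ∀ k, 0 < M k := fun k => lt_of_lt_of_le (hH k 0) (hMle k 0)
  have hPnn : ∀ k, 0 ≤ P k := fun k =>
    Finset.sum_nonneg fun t _ => mul_nonneg (mul_nonneg (hτ t) (hρ k t)) (hH k t).le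
  have hmnn : 0 ≤ m := le_ciInf hPnn
  have hmle : ∀ k, m ≤ P k := fun k =>
    ciInf_le (Set.Finite.bddBelow (Set.finite_range _)) k
  set η : Fin K → ℝ := fun k => ∑ t, τ t * ρ k t with hη
  have hηsum : (∑ k, η k) = 1 := by
    rw [hη]
    rw [Finset.sum_comm]
    calc (∑ t, ∑ k, τ t * ρ k t) = ∑ t, τ t * ∑ k, ρ k t := by
          simp [Finset.mul_sum]
      _ = 1 := by simp [hρsum, hτsum]
  have hPle : ∀ k, P k ≤ M k * η k := by
    intro k
    rw [hP, hη]; simp only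
    rw [Finset.mul_sum]
    refine Finset.sum_le_sum fun t _ => ?_
    have := mul_le_mul_of_nonneg_left (hMle k t) (mul_nonneg (hτ t) (hρ k t))
    nlinarith [this]
  have key : ∀ k, m * (M k)⁻¹ ≤ η k := by
    intro k
    rw [← div_eq_mul_inv, div_le_iff₀ (hMpos k)]
    calc m ≤ P k := hmle k
      _ ≤ M k * η k := hPle k
      _ = η k * M k := mul_comm _ _
  have hsum : m * (∑ k, (M k)⁻¹) ≤ 1 := by
    rw [Finset.mul_sum, ← hηsum]
    exact Finset.sum_le_sum fun k _ => key k
  have hspos : 0 < ∑ k, (M k)⁻¹ :=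
    Finset.sum_pos (fun k _ => inv_pos.2 (hMpos k)) Finset.univ_nonempty
  rw [le_div_iff₀ hspos]
  exact hsum
end
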